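/- arXiv:2509.24794 — 6 statements merged into one kernel-verified Lean document; each statement's English description precedes it below -/
import Mathlib

section
/- Let C ⊆ F_2^n be a binary linear code with minimum distance at least 2t+1, and let u > t and r be natural numbers. Then the number of vectors y in F_2^n with wt(y) = u that lie within Hamming distance t of some codeword of weight r equals A_r · Σ_{(a,b)} C(r,a)·C(n−r,b), where the sum is over all pairs of natural numbers (a,b) with a + b ≤ t and u + a = r + b. -/
/-!
Identify a binary vector with its support. A vector `T` within distance `t` of a codeword with
support `S`, `#S = r`, is determined by the `a` positions of `S` it clears and the `b` positions
outside `S` it sets: then `#(T ∆ S) = a + b` and `#T = r - a + b`, and there are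
`C(r, a) * C(n - r, b)` such choices. Since `d_min ≥ 2t + 1`, the radius-`t` balls around distinct
codewords are disjoint, so these counts add up over the `A_r` codewords of weight `r`.
-/

open Finset
open scoped symmDiff

section UniqueDecoding

variable {ι : Type*} [Fintype ι] {β : ι → Type*} [∀ i, AddGroup (β i)] [∀ i, DecidableEq (β i)]

theorem eq_of_hammingDist_le_of_mem {S : Type*} [SetLike S (∀ i, β i)]
    [AddSubgroupClass S (∀ i, β i)] {C : S} {t : ℕ}
    (hdmin : ∀ c ∈ C, c ≠ 0 → 2 * t + 1 ≤ hammingNorm c) {y c₁ c₂ : ∀ i, β i}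
    (h₁ : c₁ ∈ C) (h₂ : c₂ ∈ C) (hy₁ : hammingDist y c₁ ≤ t) (hy₂ : hammingDist y c₂ ≤ t) :
    c₁ = c₂ := by
  by_contra hne
  have hfar := hdmin _ (add_mem (neg_mem h₁) h₂) (neg_add_eq_zero.not.2 hne)
  rw [← hammingDist_eq_hammingNorm] at hfar
  have := hammingDist_triangle_left c₁ c₂ y
  omega

end UniqueDecoding

namespace Finset

variable {α : Type*} [DecidableEq α]

theorem card_symmDiff (s t : Finset α) : #(s ∆ t) = #(s \ t) + #(t \ s) := by
  rw [symmDiff_def, sup_eq_union, card_union_of_disjoint disjoint_sdiff_sdiff]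

variable [Fintype α]

theorem card_filter_card_sdiff_eq (S : Finset α) (a b : ℕ) :
    #{T : Finset α | #(S \ T) = a ∧ #(T \ S) = b} = (#S).choose a * (#Sᶜ).choose b := by
  have recover : ∀ A ⊆ S, ∀ B ⊆ Sᶜ, S \ (S \ A ∪ B) = A ∧ (S \ A ∪ B) \ S = B := by
    intro A hA B hB
    rw [subset_iff] at hA
    simp only [subset_iff, mem_compl] at hB
    constructor <;> ext i <;> simp only [mem_union, mem_sdiff] <;> grind
  rw [← card_powersetCard a S, ← card_powersetCard b Sᶜ, ← card_product]
  refine card_nbij' (fun T => (S \ T, T \ S)) (fun AB => S \ AB.1 ∪ AB.2) ?_ ?_ ?_ ?_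
  · intro T hT
    simp only [coe_filter, mem_univ, true_and, Set.mem_ofPred_eq] at hT
    simp only [coe_product, Set.mem_prod, mem_coe, mem_powersetCard]
    exact ⟨⟨sdiff_subset, hT.1⟩, fun i hi => mem_compl.2 (mem_sdiff.1 hi).2, hT.2⟩
  · rintro ⟨A, B⟩ hAB
    simp only [coe_product, Set.mem_prod, mem_coe, mem_powersetCard] at hAB
    simp only [coe_filter, mem_univ, true_and, Set.mem_ofPred_eq,
      recover A hAB.1.1 B hAB.2.1, hAB.1.2, hAB.2.2]
  · intro T _
    ext i
    simp only [mem_union, mem_sdiff]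
    tauto
  · rintro ⟨A, B⟩ hAB
    simp only [coe_product, Set.mem_prod, mem_coe, mem_powersetCard] at hAB
    simp only [recover A hAB.1.1 B hAB.2.1]

theorem card_filter_card_eq_card_symmDiff_le (S : Finset α) (t u : ℕ) :
    #{T : Finset α | #T = u ∧ #(T ∆ S) ≤ t} =
      ∑ ab ∈ (range (t + 1) ×ˢ range (t + 1)).filter
          (fun ab => ab.1 + ab.2 ≤ t ∧ u + ab.1 = #S + ab.2),
        (#S).choose ab.1 * (#Sᶜ).choose ab.2 := by
  set pairs := (range (t + 1) ×ˢ range (t + 1)).filter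
    (fun ab => ab.1 + ab.2 ≤ t ∧ u + ab.1 = #S + ab.2)
  have hmem : ∀ T : Finset α, (#T = u ∧ #(T ∆ S) ≤ t) ↔ (#(S \ T), #(T \ S)) ∈ pairs := by
    intro T
    have hT := card_sdiff_add_card_inter T S
    have hS := card_sdiff_add_card_inter S T
    simp only [pairs, mem_filter, mem_product, mem_range, card_symmDiff, inter_comm S T] at hS ⊢
    omega
  rw [card_eq_sum_card_fiberwise (f := fun T => (#(S \ T), #(T \ S))) (t := pairs)
    (fun T hT => (hmem T).1 (mem_filter.1 hT).2)]
  refine sum_congr rfl fun ab hab => ?_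
  rw [filter_filter, ← card_filter_card_sdiff_eq]
  congr 1
  refine filter_congr fun T _ => ⟨fun h => Prod.ext_iff.1 h.2, fun ⟨ha, hb⟩ => ?_⟩
  have hfiber : (#(S \ T), #(T \ S)) = ab := Prod.ext ha hb
  exact ⟨(hmem T).2 (hfiber ▸ hab), hfiber⟩

end Finset

section Binary

variable {ι : Type*} [Fintype ι] [DecidableEq ι]

def binarySupportEquiv : (ι → ZMod 2) ≃ Finset ι where
  toFun y := {i | y i ≠ 0}
  invFun s i := if i ∈ s then 1 else 0
  left_inv y := funext fun i => by
    have hbit : ∀ a : ZMod 2, (if a ≠ 0 then 1 else 0) = a := by decide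
    simpa using hbit (y i)
  right_inv s := by
    ext i
    by_cases h : i ∈ s <;> simp [h]

theorem hammingNorm_eq_card_binarySupportEquiv (y : ι → ZMod 2) :
    hammingNorm y = #(binarySupportEquiv y) :=
  rfl

theorem hammingDist_eq_card_symmDiff_binarySupportEquiv (y z : ι → ZMod 2) :
    hammingDist y z = #(binarySupportEquiv y ∆ binarySupportEquiv z) := by
  have hbit : ∀ a b : ZMod 2, a ≠ b ↔ a ≠ 0 ∧ ¬b ≠ 0 ∨ b ≠ 0 ∧ ¬a ≠ 0 := by decide
  unfold hammingDist
  congr 1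
  ext i
  simp only [binarySupportEquiv, Equiv.coe_fn_mk, mem_filter, mem_univ, true_and, mem_symmDiff]
  exact hbit (y i) (z i)

theorem card_filter_hammingNorm_eq_hammingDist_le {c : ι → ZMod 2} {r : ℕ}
    (hc : hammingNorm c = r) (t u : ℕ) :
    #{y : ι → ZMod 2 | hammingNorm y = u ∧ hammingDist y c ≤ t} =
      ∑ ab ∈ (range (t + 1) ×ˢ range (t + 1)).filter
          (fun ab => ab.1 + ab.2 ≤ t ∧ u + ab.1 = r + ab.2),
        r.choose ab.1 * (Fintype.card ι - r).choose ab.2 := by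
  have hS : #(binarySupportEquiv c) = r := hc
  rw [← hS, ← card_compl, ← card_filter_card_eq_card_symmDiff_le]
  exact card_equiv binarySupportEquiv fun y => by
    simp only [mem_filter, mem_univ, true_and, hammingNorm_eq_card_binarySupportEquiv,
      hammingDist_eq_card_symmDiff_binarySupportEquiv]

end Binary

theorem bdd_miscorrection_count_general (n t u r : ℕ)
    (C : Submodule (ZMod 2) (Fin n → ZMod 2)) [DecidablePred (· ∈ C)]
    (hdmin : ∀ c ∈ C, c ≠ 0 → 2 * t + 1 ≤ hammingNorm c) :
    (Finset.univ.filter (fun y : Fin n → ZMod 2 =>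
        hammingNorm y = u ∧
          ∃ c ∈ C, hammingNorm c = r ∧ hammingDist y c ≤ t)).card =
      (Finset.univ.filter
          (fun c : Fin n → ZMod 2 => c ∈ C ∧ hammingNorm c = r)).card *
        ∑ ab ∈ (Finset.range (t + 1) ×ˢ Finset.range (t + 1)).filter
            (fun ab => ab.1 + ab.2 ≤ t ∧ u + ab.1 = r + ab.2),
          r.choose ab.1 * (n - r).choose ab.2 := by
  set codewords := univ.filter fun c : Fin n → ZMod 2 => c ∈ C ∧ hammingNorm c = r
  set ball := fun c : Fin n → ZMod 2 => univ.filter fun y => hammingNorm y = u ∧ hammingDist y c ≤ t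
  have hunion : univ.filter (fun y : Fin n → ZMod 2 =>
      hammingNorm y = u ∧ ∃ c ∈ C, hammingNorm c = r ∧ hammingDist y c ≤ t) =
        codewords.biUnion ball := by
    ext y
    simp only [codewords, ball, mem_biUnion, mem_filter, mem_univ, true_and]
    tauto
  have hdisjoint : (codewords : Set (Fin n → ZMod 2)).PairwiseDisjoint ball := by
    intro c₁ h₁ c₂ h₂ hne
    simp only [codewords, coe_filter, mem_univ, true_and, Set.mem_ofPred_eq] at h₁ h₂
    simp only [ball, disjoint_left, mem_filter, mem_univ, true_and]
    exact fun y hy₁ hy₂ => hne (eq_of_hammingDist_le_of_mem hdmin h₁.1 h₂.1 hy₁.2 hy₂.2)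
  rw [hunion, card_biUnion hdisjoint, sum_const_nat fun c hc => ?_]
  rw [card_filter_hammingNorm_eq_hammingDist_le (mem_filter.1 hc).2.2, Fintype.card_fin]

/-- For a binary linear code `C ⊆ 𝔽₂ⁿ` with minimum distance at least
`2t+1`, and `u > t`, the number of vectors `y` with `wt(y) = u` lying within Hamming
distance `t` of some codeword of weight `r` equals
`A_r · ∑_{(a,b) : a+b ≤ t, u+a = r+b} C(r,a)·C(n−r,b)`. -/
theorem bdd_miscorrection_count (n t u r : ℕ)
    (C : Submodule (ZMod 2) (Fin n → ZMod 2)) [DecidablePred (· ∈ C)]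
    (hdmin : ∀ c ∈ C, c ≠ 0 → 2 * t + 1 ≤ hammingNorm c)
    (hu : t < u) :
    (Finset.univ.filter (fun y : Fin n → ZMod 2 =>
        hammingNorm y = u ∧
          ∃ c ∈ C, hammingNorm c = r ∧ hammingDist y c ≤ t)).card =
      (Finset.univ.filter
          (fun c : Fin n → ZMod 2 => c ∈ C ∧ hammingNorm c = r)).card *
        ∑ ab ∈ (Finset.range (t + 1) ×ˢ Finset.range (t + 1)).filter
            (fun ab => ab.1 + ab.2 ≤ t ∧ u + ab.1 = r + ab.2),
          r.choose ab.1 * (n - r).choose ab.2 :=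
  bdd_miscorrection_count_general n t u r C hdmin
end

section
/- Let (U, E, p) model a received word with u errors and e erasures, and let y^(1), y^(2) be the complementary test patterns. If 2u + e ≥ 2t + 1, then it is not the case that both wt(y^(1)) ≤ t and wt(y^(2)) ≤ t; that is, at most one of the two test patterns can lie within Hamming distance t of the transmitted all-zero codeword. -/
/-- First test pattern: erasures filled with `p`. -/
def testPattern1 {n : ℕ} (U E : Finset (Fin n)) (p : Fin n → ZMod 2) :
    Fin n → ZMod 2 :=
  fun j => if j ∈ U then 1 else if j ∈ E then p j else 0

/-- Second test pattern: erasures filled with the complementary pattern `1 + p`. -/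
def testPattern2 {n : ℕ} (U E : Finset (Fin n)) (p : Fin n → ZMod 2) :
    Fin n → ZMod 2 :=
  fun j => if j ∈ U then 1 else if j ∈ E then 1 + p j else 0

/-- If `2u + e ≥ 2t + 1`, then not both test patterns can lie within
Hamming distance `t` of the transmitted all-zero codeword. -/
theorem not_both_testPatterns_close {n : ℕ} (U E : Finset (Fin n))
    (p : Fin n → ZMod 2) (u e t : ℕ)
    (hU : U.card = u) (hE : E.card = e) (hUE : Disjoint U E)
    (hpsupp : ∀ i ∉ E, p i = 0)
    (h : 2 * t + 1 ≤ 2 * u + e) :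
    ¬(hammingNorm (testPattern1 U E p) ≤ t ∧
      hammingNorm (testPattern2 U E p) ≤ t) := by
  rintro ⟨h1, h2⟩
  have hcases : ∀ x : ZMod 2, x = 0 ∨ x = 1 := by decide
  have key : hammingNorm (testPattern1 U E p) + hammingNorm (testPattern2 U E p)
      = 2 * u + e := by
    classical
    simp only [hammingNorm, Finset.card_filter, ← Finset.sum_add_distrib]
    have step : ∀ j : Fin n,
        ((if testPattern1 U E p j ≠ 0 then 1 else 0)
          + (if testPattern2 U E p j ≠ 0 then 1 else 0) : ℕ)
        = (if j ∈ U then 2 else 0) + (if j ∈ E then 1 else 0) := by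
      intro j
      by_cases hjU : j ∈ U
      · have hjE : j ∉ E := Finset.disjoint_left.mp hUE hjU
        simp [testPattern1, testPattern2, hjU, hjE]
      · by_cases hjE : j ∈ E
        · rcases hcases (p j) with hp | hp <;>
            simp [testPattern1, testPattern2, hjU, hjE, hp] <;> decide
        · simp [testPattern1, testPattern2, hjU, hjE]
    rw [Finset.sum_congr rfl fun j _ => step j, Finset.sum_add_distrib,
        Finset.sum_ite_mem, Finset.sum_ite_mem, Finset.univ_inter, Finset.univ_inter,
        Finset.sum_const, Finset.sum_const, smul_eq_mul, smul_eq_mul, mul_one,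
        hU, hE, mul_comm]
  omega
end

section
/- Let (U, E, p) model a received word with u errors and e erasures, and let y^(1), y^(2) be the complementary test patterns. If 2u + e ≤ 2t, then wt(y^(1)) ≤ t or wt(y^(2)) ≤ t; that is, at least one of the two test patterns lies within Hamming distance t of the transmitted all-zero codeword. -/
/-- If `2u + e ≤ 2t`, then at least one of the two test patterns
lies within Hamming distance `t` of the transmitted all-zero codeword. -/
theorem one_testPattern_close {n : ℕ} (U E : Finset (Fin n))
    (p : Fin n → ZMod 2) (u e t : ℕ)
    (hU : U.card = u) (hE : E.card = e) (hUE : Disjoint U E)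
    (hpsupp : ∀ i ∉ E, p i = 0)
    (h : 2 * u + e ≤ 2 * t) :
    hammingNorm (testPattern1 U E p) ≤ t ∨
    hammingNorm (testPattern2 U E p) ≤ t := by
  have key : hammingNorm (testPattern1 U E p) + hammingNorm (testPattern2 U E p)
      = 2 * u + e := by
    unfold hammingNorm
    rw [Finset.card_filter, Finset.card_filter, ← Finset.sum_add_distrib]
    have : ∀ i : Fin n,
        ((if testPattern1 U E p i ≠ 0 then (1:ℕ) else 0) +
         (if testPattern2 U E p i ≠ 0 then (1:ℕ) else 0))
        = (if i ∈ U then 2 else 0) + (if i ∈ E then 1 else 0) := by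
      intro i
      simp only [testPattern1, testPattern2]
      by_cases hiU : i ∈ U
      · have : i ∉ E := Finset.disjoint_left.mp hUE hiU
        simp [hiU, this]
      · by_cases hiE : i ∈ E
        · simp only [hiU, if_false, hiE, if_true]
          have : p i = 0 ∨ p i = 1 := by have := (by decide : ∀ x : ZMod 2, x = 0 ∨ x = 1); exact this _
          rcases this with h0 | h0 <;> simp [h0] <;> decide
        · simp [hiU, hiE]
    simp_rw [this]
    rw [Finset.sum_add_distrib, Finset.sum_ite_mem, Finset.sum_ite_mem,
      Finset.univ_inter, Finset.univ_inter, Finset.sum_const, Finset.sum_const,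
      hU, hE]
    ring
  omega
end

section
/- Let C ⊆ F_2^n be a binary linear code with minimum distance d_min ≥ 2t + 1, and let (U, E, p) model a received word with u errors and e erasures satisfying 2u + e ≤ 2t, with complementary test patterns y^(1), y^(2). Then (i) at least one of y^(1), y^(2) lies within Hamming distance t of the all-zero codeword, and (ii) for every nonzero codeword c ∈ C, d_E(c) > d_E(0). Consequently, among all codewords of C that lie within Hamming distance t of y^(1) or of y^(2), the all-zero codeword is present and is the unique one minimizing the erased distance d_E, so the error-and-erasure decoder (which applies bounded distance decoding of radius t to both test patterns and selects the candidate codeword with smaller erased distance) outputs the transmitted codeword. -/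
/-- The erased distance `d_E(c) = |{i ∉ E : c_i ≠ y_i}|`, where `y_i = 1` for `i ∈ U`
and `y_i = 0` for `i ∉ U ∪ E`. -/
def erasedDist {n : ℕ} (U E : Finset (Fin n)) (c : Fin n → ZMod 2) : ℕ :=
  (Finset.univ.filter
    (fun i => i ∉ E ∧ c i ≠ (if i ∈ U then (1 : ZMod 2) else 0))).card

open Finset

section

variable {n : ℕ} {U E : Finset (Fin n)}

lemma testPattern_ne_zero_count (hUE : Disjoint U E) (p : Fin n → ZMod 2) (i : Fin n) :
    ((if testPattern1 U E p i ≠ 0 then 1 else 0) +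
        (if testPattern2 U E p i ≠ 0 then 1 else 0) : ℕ) =
      2 * (if i ∈ U then 1 else 0) + (if i ∈ E then 1 else 0) := by
  by_cases hiU : i ∈ U
  · simp [testPattern1, testPattern2, hiU, disjoint_left.mp hUE hiU]
  by_cases hiE : i ∈ E
  · simp only [testPattern1, testPattern2, hiU, hiE, if_false, if_true]
    generalize p i = x
    revert x
    decide
  · simp [testPattern1, testPattern2, hiU, hiE]

theorem hammingNorm_testPattern1_add_hammingNorm_testPattern2 (hUE : Disjoint U E)
    (p : Fin n → ZMod 2) :
    hammingNorm (testPattern1 U E p) + hammingNorm (testPattern2 U E p) = 2 * #U + #E := by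
  rw [hammingNorm, hammingNorm, card_filter, card_filter, ← sum_add_distrib]
  simp only [testPattern_ne_zero_count hUE, sum_add_distrib, ← mul_sum, sum_ite_mem,
    univ_inter, sum_const, smul_eq_mul, mul_one]

theorem erasedDist_zero (hUE : Disjoint U E) : erasedDist U E 0 = #U := by
  rw [erasedDist]
  congr 1
  ext i
  by_cases hiU : i ∈ U <;> simp [hiU, disjoint_left.mp hUE]

theorem hammingNorm_le_erasedDist_add_card (U E : Finset (Fin n)) (c : Fin n → ZMod 2) :
    hammingNorm c ≤ erasedDist U E c + #E + #U := by
  calc hammingNorm c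
      ≤ #(({i | i ∉ E ∧ c i ≠ (if i ∈ U then (1 : ZMod 2) else 0)} : Finset (Fin n)) ∪ E ∪
          U) := by
        refine card_le_card fun i hi => ?_
        by_cases hiU : i ∈ U <;> by_cases hiE : i ∈ E <;> simp_all
    _ ≤ erasedDist U E c + #E + #U := by
        grw [card_union_le, card_union_le]
        rfl

theorem erasedDist_zero_lt_of_lt_hammingNorm (hUE : Disjoint U E) {c : Fin n → ZMod 2}
    (hc : 2 * #U + #E < hammingNorm c) : erasedDist U E 0 < erasedDist U E c := by
  have := hammingNorm_le_erasedDist_add_card U E c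
  rw [erasedDist_zero hUE]
  omega

end

theorem eaed_success_general {n t : ℕ} (C : Submodule (ZMod 2) (Fin n → ZMod 2))
    (U E : Finset (Fin n)) (p : Fin n → ZMod 2) (u e : ℕ)
    (hU : U.card = u) (hE : E.card = e) (hUE : Disjoint U E)
    (hdmin : ∀ c ∈ C, c ≠ 0 → 2 * t + 1 ≤ hammingNorm c)
    (h : 2 * u + e ≤ 2 * t) :
    (hammingNorm (testPattern1 U E p) ≤ t ∨
        hammingNorm (testPattern2 U E p) ≤ t) ∧
    (∀ c ∈ C, c ≠ 0 →
        erasedDist U E (0 : Fin n → ZMod 2) < erasedDist U E c) ∧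
    ((0 : Fin n → ZMod 2) ∈ C ∧
      (hammingDist (testPattern1 U E p) (0 : Fin n → ZMod 2) ≤ t ∨
       hammingDist (testPattern2 U E p) (0 : Fin n → ZMod 2) ≤ t)) ∧
    (∀ c ∈ C,
        (hammingDist (testPattern1 U E p) c ≤ t ∨
         hammingDist (testPattern2 U E p) c ≤ t) →
        c ≠ 0 →
        erasedDist U E (0 : Fin n → ZMod 2) < erasedDist U E c) := by
  subst hU hE
  have hweights := hammingNorm_testPattern1_add_hammingNorm_testPattern2 hUE p
  have hdecodable : hammingNorm (testPattern1 U E p) ≤ t ∨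
      hammingNorm (testPattern2 U E p) ≤ t := by
    omega
  have hunique : ∀ c ∈ C, c ≠ 0 → erasedDist U E 0 < erasedDist U E c := fun c hc hc0 =>
    erasedDist_zero_lt_of_lt_hammingNorm hUE (by have := hdmin c hc hc0; omega)
  refine ⟨hdecodable, hunique, ⟨C.zero_mem, ?_⟩, fun c hc _ => hunique c hc⟩
  simpa only [hammingDist_zero_right] using hdecodable

/-- If `d_min ≥ 2t + 1` and `2u + e ≤ 2t`, then (i) at least one
test pattern lies within distance `t` of the all-zero codeword, (ii) every nonzero
codeword `c ∈ C` has `d_E(c) > d_E(0)`, and consequently among the codewords found by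
bounded distance decoding of the two test patterns, the all-zero codeword is present
and is the unique minimizer of the erased distance, so the error-and-erasure decoder
outputs the transmitted codeword. -/
theorem eaed_success {n t : ℕ} (C : Submodule (ZMod 2) (Fin n → ZMod 2))
    (U E : Finset (Fin n)) (p : Fin n → ZMod 2) (u e : ℕ)
    (hU : U.card = u) (hE : E.card = e) (hUE : Disjoint U E)
    (hpsupp : ∀ i ∉ E, p i = 0)
    (hdmin : ∀ c ∈ C, c ≠ 0 → 2 * t + 1 ≤ hammingNorm c)
    (h : 2 * u + e ≤ 2 * t) :
    (hammingNorm (testPattern1 U E p) ≤ t ∨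
        hammingNorm (testPattern2 U E p) ≤ t) ∧
    (∀ c ∈ C, c ≠ 0 →
        erasedDist U E (0 : Fin n → ZMod 2) < erasedDist U E c) ∧
    ((0 : Fin n → ZMod 2) ∈ C ∧
      (hammingDist (testPattern1 U E p) (0 : Fin n → ZMod 2) ≤ t ∨
       hammingDist (testPattern2 U E p) (0 : Fin n → ZMod 2) ≤ t)) ∧
    (∀ c ∈ C,
        (hammingDist (testPattern1 U E p) c ≤ t ∨
         hammingDist (testPattern2 U E p) c ≤ t) →
        c ≠ 0 →
        erasedDist U E (0 : Fin n → ZMod 2) < erasedDist U E c) :=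
  eaed_success_general C U E p u e hU hE hUE hdmin h
end

section
/- Fix c ∈ F_2^n with wt(c) = r, and natural numbers u, e, e_1, a, b, λ, γ satisfying r + b = u + e − e_1 + a. Then the number of triples (U, E, p), where E ⊆ {0,…,n−1} with |E| = e, U ⊆ {0,…,n−1} with U ∩ E = ∅ and |U| = u, and p : E → F_2 with wt(p) = e_1, such that the complementary test patterns y^(1), y^(2) satisfy |{i : c_i = 1, y^(2)_i = 0}| = a, |{i : c_i = 0, y^(2)_i = 1}| = b, |{i ∈ E : c_i = 0, y^(1)_i = 1}| = λ, and |{i ∈ E : c_i = 0, y^(1)_i = 0}| = γ, equals C(r,a)·C(n−r,b)·C(n−r−b,λ)·C(b,γ)·C(r−a, e−e_1−γ)·C(a, e_1−λ). -/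
/-- Binomial coefficient with an integer lower argument (zero when negative). -/
def chooseZ (m : ℕ) (k : ℤ) : ℕ := if 0 ≤ k then m.choose k.toNat else 0

/-!
Let `S` be the support of `c`, `E₁ = {p = 1}` and `E₀ = E \ E₁`, so that `y⁽²⁾` is supported on
`U ⊔ E₀`. A configuration is determined by the nested choices `S ∩ E₁ ⊆ A`, `S ∩ E₀ ⊆ S \ A`,
where `A = {c = 1, y⁽²⁾ = 0}`, and `Sᶜ ∩ E₀ ⊆ B`, `Sᶜ ∩ E₁ ⊆ Sᶜ \ B`, where `B = {c = 0, y⁽²⁾ = 1}`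
(then `U = (S \ (A ∪ E₀)) ∪ (B \ E₀)`); their sizes are `a, e₁ - λ, e - e₁ - γ` and `b, γ, λ`.
Every such choice arises, because the one remaining condition `|U| = u` is automatic: counting
the weight of `y⁽²⁾` in two ways gives `r - a + b = |U| + e - e₁`. When `λ > e₁` or
`e₁ + γ > e` there is no configuration, matching the value `0` of `chooseZ`.
-/

open Finset

abbrev InOut (α : Type*) := (_ : Finset α) × Finset α × Finset α

section InOut

variable {α : Type*} [DecidableEq α]

def IsInOut (s : Finset α) (Q : InOut α) : Prop :=
  Q.1 ⊆ s ∧ Q.2.1 ⊆ Q.1 ∧ Q.2.2 ⊆ s \ Q.1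

def powersetCardInOut (s : Finset α) (k i j : ℕ) : Finset (InOut α) :=
  (s.powersetCard k).sigma fun A => A.powersetCard i ×ˢ (s \ A).powersetCard j

theorem isInOut_iff {s : Finset α} {Q : InOut α} :
    IsInOut s Q ↔
      ∀ x, (x ∈ Q.1 → x ∈ s) ∧ (x ∈ Q.2.1 → x ∈ Q.1) ∧ (x ∈ Q.2.2 → x ∈ s ∧ x ∉ Q.1) := by
  simp only [IsInOut, subset_iff, mem_sdiff]
  grind

theorem mem_powersetCardInOut {s : Finset α} {k i j : ℕ} {Q : InOut α} :
    Q ∈ powersetCardInOut s k i j ↔ IsInOut s Q ∧ #Q.1 = k ∧ #Q.2.1 = i ∧ #Q.2.2 = j := by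
  simp only [powersetCardInOut, IsInOut, mem_sigma, mem_product, mem_powersetCard]
  tauto

theorem card_powersetCardInOut (s : Finset α) (k i j : ℕ) :
    #(powersetCardInOut s k i j) = (#s).choose k * (k.choose i * (#s - k).choose j) := by
  rw [powersetCardInOut, card_sigma, sum_const_nat fun A hA => ?_, card_powersetCard]
  obtain ⟨hAs, rfl⟩ := mem_powersetCard.1 hA
  rw [card_product, card_powersetCard, card_powersetCard, card_sdiff_of_subset hAs]

end InOut

section ZModTwo

variable {ι : Type*}

theorem ZMod.eq_zero_iff_not_eq_one_mod_two {x : ZMod 2} : x = 0 ↔ ¬x = 1 := by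
  revert x; decide

theorem card_filter_eq_one_add_card_filter_eq_zero (s : Finset ι) (f : ι → ZMod 2) :
    #{i ∈ s | f i = 1} + #{i ∈ s | f i = 0} = #s := by
  simp only [ZMod.eq_zero_iff_not_eq_one_mod_two, card_filter_add_card_filter_not]

theorem card_filter_eq_one_and_add_card_filter_eq_zero_and (s : Finset ι) (f : ι → ZMod 2)
    (P : ι → Prop) [DecidablePred P] :
    #{i ∈ s | f i = 1 ∧ P i} + #{i ∈ s | f i = 0 ∧ P i} = #{i ∈ s | P i} := by
  rw [← card_filter_eq_one_add_card_filter_eq_zero {i ∈ s | P i} f]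
  simp only [filter_filter, and_comm]

variable [Fintype ι]

theorem hammingNorm_eq_card_filter_eq_one (x : ι → ZMod 2) :
    hammingNorm x = #{i | x i = 1} := by
  simp only [hammingNorm, ne_eq, ZMod.eq_zero_iff_not_eq_one_mod_two, not_not]

theorem card_filter_eq_zero_eq_sub_hammingNorm (x : ι → ZMod 2) :
    #{i | x i = 0} = Fintype.card ι - hammingNorm x := by
  have := card_filter_eq_one_add_card_filter_eq_zero univ x
  rw [card_univ] at this
  rw [hammingNorm_eq_card_filter_eq_one]
  omega

theorem hammingNorm_add_card_filter_eq_hammingNorm_add_card_filter (c y : ι → ZMod 2) :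
    hammingNorm y + #{i | c i = 1 ∧ y i = 0} = hammingNorm c + #{i | c i = 0 ∧ y i = 1} := by
  have hy := card_filter_eq_one_and_add_card_filter_eq_zero_and univ c (y · = 1)
  have hc := card_filter_eq_one_and_add_card_filter_eq_zero_and univ y (c · = 1)
  simp only [and_comm (a := y _ = _)] at hc
  rw [hammingNorm_eq_card_filter_eq_one, hammingNorm_eq_card_filter_eq_one, ← hy, ← hc]
  omega

end ZModTwo

theorem chooseZ_natCast (m k : ℕ) : chooseZ m k = m.choose k := by
  simp [chooseZ]

theorem chooseZ_of_neg (m : ℕ) {k : ℤ} (hk : k < 0) : chooseZ m k = 0 :=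
  if_neg hk.not_ge

variable {n : ℕ}

section TestPatterns

variable {U E : Finset (Fin n)} {p : Fin n → ZMod 2}

theorem testPattern1_eq_one_iff {i : Fin n} :
    testPattern1 U E p i = 1 ↔ i ∈ U ∨ i ∈ E ∧ p i = 1 := by
  unfold testPattern1
  split_ifs <;> simp_all

theorem testPattern2_eq_one_iff {i : Fin n} :
    testPattern2 U E p i = 1 ↔ i ∈ U ∨ i ∈ E ∧ ¬p i = 1 := by
  unfold testPattern2
  split_ifs <;> simp_all
  generalize p i = x
  revert x; decide

theorem hammingNorm_eq_card_filter_testPattern1 (hUE : Disjoint U E) (hp : ∀ i ∉ E, p i = 0) :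
    hammingNorm p = #{i ∈ E | testPattern1 U E p i = 1} := by
  rw [hammingNorm_eq_card_filter_eq_one]
  congr 1
  ext i
  have hpi := hp i
  have hUEi : i ∈ U → i ∉ E := fun h => disjoint_left.1 hUE h
  simp only [mem_filter, mem_univ, true_and, testPattern1_eq_one_iff]
  grind

theorem card_eq_hammingNorm_add_card_filter_testPattern1 (hUE : Disjoint U E)
    (hp : ∀ i ∉ E, p i = 0) : #E = hammingNorm p + #{i ∈ E | testPattern1 U E p i = 0} := by
  rw [hammingNorm_eq_card_filter_testPattern1 hUE hp, card_filter_eq_one_add_card_filter_eq_zero]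

theorem hammingNorm_testPattern2 (hUE : Disjoint U E) :
    hammingNorm (testPattern2 U E p) = #U + #{i ∈ E | testPattern1 U E p i = 0} := by
  have hsupp : ({i | testPattern2 U E p i = 1} : Finset (Fin n)) =
      U ∪ {i ∈ E | testPattern1 U E p i = 0} := by
    ext i
    have hUEi : i ∈ U → i ∉ E := fun h => disjoint_left.1 hUE h
    simp only [mem_filter, mem_univ, mem_union, true_and, testPattern1_eq_one_iff,
      testPattern2_eq_one_iff, ZMod.eq_zero_iff_not_eq_one_mod_two]
    grind
  rw [hammingNorm_eq_card_filter_eq_one, hsupp,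
    card_union_of_disjoint (hUE.mono_right (filter_subset _ _))]

end TestPatterns

section Configurations

variable {c : Fin n → ZMod 2}

variable (c) in
/-- On `E` the first test pattern is `p`, so the erased components are `S ∩ E₁`, `S ∩ E₀`,
`Sᶜ ∩ E₀` and `Sᶜ ∩ E₁`. -/
def toChoices (U E : Finset (Fin n)) (p : Fin n → ZMod 2) : InOut (Fin n) × InOut (Fin n) :=
  (⟨({i | c i = 1 ∧ testPattern2 U E p i = 0} : Finset (Fin n)),
      {i ∈ E | c i = 1 ∧ testPattern1 U E p i = 1}, {i ∈ E | c i = 1 ∧ testPattern1 U E p i = 0}⟩,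
    ⟨({i | c i = 0 ∧ testPattern2 U E p i = 1} : Finset (Fin n)),
      {i ∈ E | c i = 0 ∧ testPattern1 U E p i = 0}, {i ∈ E | c i = 0 ∧ testPattern1 U E p i = 1}⟩)

variable (c) in
def ofChoices (Q : InOut (Fin n) × InOut (Fin n)) :
    Finset (Fin n) × Finset (Fin n) × (Fin n → ZMod 2) :=
  (({i | c i = 1} : Finset (Fin n)) \ (Q.1.1 ∪ Q.1.2.2) ∪ (Q.2.1 \ Q.2.2.1),
    Q.1.2.1 ∪ Q.1.2.2 ∪ Q.2.2.1 ∪ Q.2.2.2,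
    fun i => if i ∈ Q.1.2.1 ∪ Q.2.2.2 then 1 else 0)

theorem toChoices_isInOut {U E : Finset (Fin n)} {p : Fin n → ZMod 2} (hUE : Disjoint U E)
    (hp : ∀ i ∉ E, p i = 0) :
    IsInOut {i | c i = 1} (toChoices c U E p).1 ∧ IsInOut {i | c i = 0} (toChoices c U E p).2 := by
  simp only [isInOut_iff, toChoices]
  constructor
  all_goals
    intro i
    have hUEi : i ∈ U → i ∉ E := fun h => disjoint_left.1 hUE h
    have hpi := hp i
    have hci := ZMod.eq_zero_iff_not_eq_one_mod_two (x := c i)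
    simp only [mem_filter, mem_univ, true_and, testPattern1_eq_one_iff, testPattern2_eq_one_iff,
      ZMod.eq_zero_iff_not_eq_one_mod_two] at hpi ⊢
    grind

theorem ofChoices_toChoices {U E : Finset (Fin n)} {p : Fin n → ZMod 2} (hUE : Disjoint U E)
    (hp : ∀ i ∉ E, p i = 0) : ofChoices c (toChoices c U E p) = (U, E, p) := by
  simp only [toChoices, ofChoices, Prod.mk.injEq]
  refine ⟨?_, ?_, funext fun i => ?_⟩
  all_goals try ext i
  all_goals
    have hUEi : i ∈ U → i ∉ E := fun h => disjoint_left.1 hUE h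
    have hpi := hp i
    have hpi' := ZMod.eq_zero_iff_not_eq_one_mod_two (x := p i)
    simp only [mem_union, mem_sdiff, mem_filter, mem_univ, true_and, testPattern1_eq_one_iff,
      testPattern2_eq_one_iff, ZMod.eq_zero_iff_not_eq_one_mod_two]
    grind

section OfChoices

variable {Q : InOut (Fin n) × InOut (Fin n)}

theorem ofChoices_disjoint_and_eq_zero (h₁ : IsInOut {i | c i = 1} Q.1)
    (h₀ : IsInOut {i | c i = 0} Q.2) :
    Disjoint (ofChoices c Q).1 (ofChoices c Q).2.1 ∧
      ∀ i ∉ (ofChoices c Q).2.1, (ofChoices c Q).2.2 i = 0 := by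
  obtain ⟨⟨A, σ, τ⟩, ⟨B, Γ, Λ⟩⟩ := Q
  rw [isInOut_iff] at h₁ h₀
  simp only [ofChoices, disjoint_left]
  constructor
  all_goals
    intro i
    have h₁i := h₁ i
    have h₀i := h₀ i
    simp only [mem_union, mem_sdiff, mem_filter, mem_univ, true_and] at h₁i h₀i ⊢
    grind

theorem toChoices_ofChoices (h₁ : IsInOut {i | c i = 1} Q.1) (h₀ : IsInOut {i | c i = 0} Q.2) :
    toChoices c (ofChoices c Q).1 (ofChoices c Q).2.1 (ofChoices c Q).2.2 = Q := by
  obtain ⟨⟨A, σ, τ⟩, ⟨B, Γ, Λ⟩⟩ := Q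
  rw [isInOut_iff] at h₁ h₀
  simp only [toChoices, ofChoices, Prod.mk.injEq, Sigma.mk.injEq, heq_eq_eq]
  refine ⟨⟨?_, ?_, ?_⟩, ⟨?_, ?_, ?_⟩⟩
  all_goals
    ext i
    have h₁i := h₁ i
    have h₀i := h₀ i
    have hci := ZMod.eq_zero_iff_not_eq_one_mod_two (x := c i)
    simp only [mem_union, mem_sdiff, mem_filter, mem_univ, true_and, testPattern1_eq_one_iff,
      testPattern2_eq_one_iff, ZMod.eq_zero_iff_not_eq_one_mod_two] at h₁i h₀i ⊢
    split_ifs <;> grind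

end OfChoices

variable (c) in
def eaedConfigurations (u e e₁ a b lam gam : ℕ) :
    Finset (Finset (Fin n) × Finset (Fin n) × (Fin n → ZMod 2)) :=
  Finset.univ.filter
    (fun T : Finset (Fin n) × Finset (Fin n) × (Fin n → ZMod 2) =>
      T.1.card = u ∧ T.2.1.card = e ∧ Disjoint T.1 T.2.1 ∧
      (∀ i ∉ T.2.1, T.2.2 i = 0) ∧ hammingNorm T.2.2 = e₁ ∧
      (Finset.univ.filter
        (fun i => c i = 1 ∧ testPattern2 T.1 T.2.1 T.2.2 i = 0)).card = a ∧
      (Finset.univ.filter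
        (fun i => c i = 0 ∧ testPattern2 T.1 T.2.1 T.2.2 i = 1)).card = b ∧
      (T.2.1.filter
        (fun i => c i = 0 ∧ testPattern1 T.1 T.2.1 T.2.2 i = 1)).card = lam ∧
      (T.2.1.filter
        (fun i => c i = 0 ∧ testPattern1 T.1 T.2.1 T.2.2 i = 0)).card = gam)

variable {u e e₁ a b lam gam : ℕ}

theorem le_of_mem_eaedConfigurations {T : Finset (Fin n) × Finset (Fin n) × (Fin n → ZMod 2)}
    (hT : T ∈ eaedConfigurations c u e e₁ a b lam gam) : lam ≤ e₁ ∧ e₁ + gam ≤ e := by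
  obtain ⟨U, E, p⟩ := T
  simp only [eaedConfigurations, mem_filter, mem_univ, true_and] at hT
  obtain ⟨-, hE, hUE, hp, hp₁, -, -, hlam, hgam⟩ := hT
  have := card_filter_eq_one_and_add_card_filter_eq_zero_and E c (testPattern1 U E p · = 1)
  have := card_filter_eq_one_and_add_card_filter_eq_zero_and E c (testPattern1 U E p · = 0)
  have := hammingNorm_eq_card_filter_testPattern1 hUE hp
  have := card_eq_hammingNorm_add_card_filter_testPattern1 hUE hp
  omega

theorem mem_eaedConfigurations_iff {U E : Finset (Fin n)} {p : Fin n → ZMod 2}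
    (hUE : Disjoint U E) (hp : ∀ i ∉ E, p i = 0)
    (hconstraint : (hammingNorm c : ℤ) + b = u + e - e₁ + a) (hlam : lam ≤ e₁)
    (hgam : e₁ + gam ≤ e) :
    (U, E, p) ∈ eaedConfigurations c u e e₁ a b lam gam ↔
      toChoices c U E p ∈ powersetCardInOut {i | c i = 1} a (e₁ - lam) (e - e₁ - gam) ×ˢ
        powersetCardInOut {i | c i = 0} b gam lam := by
  obtain ⟨h₁, h₀⟩ := toChoices_isInOut (c := c) hUE hp
  have := card_filter_eq_one_and_add_card_filter_eq_zero_and E c (testPattern1 U E p · = 1)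
  have := card_filter_eq_one_and_add_card_filter_eq_zero_and E c (testPattern1 U E p · = 0)
  have := hammingNorm_eq_card_filter_testPattern1 hUE hp
  have := card_eq_hammingNorm_add_card_filter_testPattern1 hUE hp
  have := hammingNorm_testPattern2 (p := p) hUE
  have := hammingNorm_add_card_filter_eq_hammingNorm_add_card_filter c (testPattern2 U E p)
  rw [mem_product, mem_powersetCardInOut, mem_powersetCardInOut]
  simp only [eaedConfigurations, mem_filter, mem_univ, eq_true h₁, eq_true h₀, eq_true hUE,
    eq_true hp, true_and]
  simp only [toChoices]
  omega

theorem card_eaedConfigurations (hconstraint : (hammingNorm c : ℤ) + b = u + e - e₁ + a)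
    (hlam : lam ≤ e₁) (hgam : e₁ + gam ≤ e) :
    #(eaedConfigurations c u e e₁ a b lam gam) =
      #(powersetCardInOut {i | c i = 1} a (e₁ - lam) (e - e₁ - gam)) *
        #(powersetCardInOut {i | c i = 0} b gam lam) := by
  rw [← card_product]
  refine card_nbij' (fun T => toChoices c T.1 T.2.1 T.2.2) (ofChoices c) ?_ ?_ ?_ ?_
  · rintro ⟨U, E, p⟩ hT
    obtain ⟨-, -, hUE, hp, -⟩ := (mem_filter.1 hT).2
    exact (mem_eaedConfigurations_iff hUE hp hconstraint hlam hgam).1 hT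
  · intro Q hQ
    have h₁ := (mem_powersetCardInOut.1 (mem_product.1 hQ).1).1
    have h₀ := (mem_powersetCardInOut.1 (mem_product.1 hQ).2).1
    obtain ⟨hUE, hp⟩ := ofChoices_disjoint_and_eq_zero h₁ h₀
    rw [← toChoices_ofChoices h₁ h₀] at hQ
    exact (mem_eaedConfigurations_iff hUE hp hconstraint hlam hgam).2 hQ
  · rintro ⟨U, E, p⟩ hT
    obtain ⟨-, -, hUE, hp, -⟩ := (mem_filter.1 hT).2
    exact ofChoices_toChoices hUE hp
  · intro Q hQ
    exact toChoices_ofChoices (mem_powersetCardInOut.1 (mem_product.1 hQ).1).1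
      (mem_powersetCardInOut.1 (mem_product.1 hQ).2).1

end Configurations

/-- Fix `c` with `wt(c) = r` and naturals `u, e, e₁, a, b, λ, γ`
with `r + b = u + e − e₁ + a`. The number of triples `(U, E, p)` with `|U| = u`,
`|E| = e`, `U ∩ E = ∅`, `wt(p) = e₁`, whose test patterns satisfy
`|{i : c_i = 1, y⁽²⁾_i = 0}| = a`, `|{i : c_i = 0, y⁽²⁾_i = 1}| = b`,
`|{i ∈ E : c_i = 0, y⁽¹⁾_i = 1}| = λ` and `|{i ∈ E : c_i = 0, y⁽¹⁾_i = 0}| = γ`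
equals `C(r,a)·C(n−r,b)·C(n−r−b,λ)·C(b,γ)·C(r−a, e−e₁−γ)·C(a, e₁−λ)`. -/
theorem eaed_configuration_count {n : ℕ} (c : Fin n → ZMod 2)
    (u e e₁ r a b lam gam : ℕ) (hc : hammingNorm c = r)
    (hconstraint : (r : ℤ) + b = u + e - e₁ + a) :
    (Finset.univ.filter
        (fun T : Finset (Fin n) × Finset (Fin n) × (Fin n → ZMod 2) =>
          T.1.card = u ∧ T.2.1.card = e ∧ Disjoint T.1 T.2.1 ∧
          (∀ i ∉ T.2.1, T.2.2 i = 0) ∧ hammingNorm T.2.2 = e₁ ∧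
          (Finset.univ.filter
            (fun i => c i = 1 ∧ testPattern2 T.1 T.2.1 T.2.2 i = 0)).card = a ∧
          (Finset.univ.filter
            (fun i => c i = 0 ∧ testPattern2 T.1 T.2.1 T.2.2 i = 1)).card = b ∧
          (T.2.1.filter
            (fun i => c i = 0 ∧ testPattern1 T.1 T.2.1 T.2.2 i = 1)).card = lam ∧
          (T.2.1.filter
            (fun i => c i = 0 ∧ testPattern1 T.1 T.2.1 T.2.2 i = 0)).card = gam)).card =
      r.choose a * (n - r).choose b * (n - r - b).choose lam * b.choose gam *
        chooseZ (r - a) ((e : ℤ) - e₁ - gam) * chooseZ a ((e₁ : ℤ) - lam) := by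
  change #(eaedConfigurations c u e e₁ a b lam gam) = _
  by_cases h : lam ≤ e₁ ∧ e₁ + gam ≤ e
  · obtain ⟨hlam, hgam⟩ := h
    rw [card_eaedConfigurations (by rwa [hc]) hlam hgam, card_powersetCardInOut,
      card_powersetCardInOut, card_filter_eq_zero_eq_sub_hammingNorm, Fintype.card_fin,
      ← hammingNorm_eq_card_filter_eq_one, hc,
      show (e : ℤ) - e₁ - gam = (e - e₁ - gam : ℕ) by omega,
      show (e₁ : ℤ) - lam = (e₁ - lam : ℕ) by omega, chooseZ_natCast, chooseZ_natCast]
    ring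
  · rw [eq_empty_of_forall_notMem fun T hT => h (le_of_mem_eaedConfigurations hT), card_empty]
    rcases not_and_or.1 h with h | h
    · rw [chooseZ_of_neg a (by omega : (e₁ : ℤ) - lam < 0), mul_zero]
    · rw [chooseZ_of_neg (r - a) (by omega : (e : ℤ) - e₁ - gam < 0), mul_zero, zero_mul]
end

section
/- Let C ⊆ F_2^n be a binary linear code with minimum distance at least 2t+1, let u > t and r be natural numbers, and let x, z be real numbers. For a vector w ∈ F_2^n and codeword c ∈ C, write a(w,c) = |{i : c_i = 1, w_i = 0}| and b(w,c) = |{i : c_i = 0, w_i = 1}|. Then Σ_{w : wt(w) = u} Σ_{c ∈ C : wt(c) = r, d(w,c) ≤ t} x^{a(w,c)} · z^{b(w,c)} = A_r · Σ_{(a,b)} C(r,a)·C(n−r,b)·x^a·z^b, where the inner sum on the right is over all pairs of natural numbers (a,b) with a + b ≤ t and u + a = r + b. (With x = 1−P_ca and z = 1−P_wa this gives the numerator of the miscorrection probability of bounded distance decoding aided by anchor bits.) -/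
/-!
Swapping the two sums turns the left side into a sum over the codewords `c` of weight `r` of a
sum over the words `w` of weight `u` within distance `t` of `c`. For fixed `c` the pair
`(a, b) = (a(w,c), b(w,c))` determines both `d(w,c) = a + b` and `wt(w) = r - a + b`, and the
words with a given pair are obtained from `c` by clearing `a` of its `r` ones and setting `b` of
its `n - r` zeros, so there are `C(r,a)·C(n-r,b)` of them. Hence the inner sum is the same for
every `c`.
-/

open Finset Fintype

namespace BinaryWord

variable {ι : Type*} [Fintype ι]

theorem eq_zero_or_eq_one (a : ZMod 2) : a = 0 ∨ a = 1 := by decide +revert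

def flipSets (c w : ι → ZMod 2) : Finset ι × Finset ι :=
  (univ.filter fun i => c i = 1 ∧ w i = 0, univ.filter fun i => c i = 0 ∧ w i = 1)

/-- The pair `(a(w,c), b(w,c))`. -/
def flipCounts (c w : ι → ZMod 2) : ℕ × ℕ :=
  (#(flipSets c w).1, #(flipSets c w).2)

theorem card_filter_eq_one_eq_hammingNorm (c : ι → ZMod 2) :
    #{i | c i = 1} = hammingNorm c := by
  refine congrArg card (filter_congr fun i _ => ?_)
  rcases eq_zero_or_eq_one (c i) with h | h <;> simp [h]

theorem card_filter_eq_zero_eq_card_sub_hammingNorm (c : ι → ZMod 2) :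
    #{i | c i = 0} = card ι - hammingNorm c := by
  rw [hammingNorm, ← card_univ, ← card_filter_add_card_filter_not (s := univ) (c · ≠ 0)]
  simp only [not_not, add_tsub_cancel_left]

theorem hammingDist_eq_flipCounts (c w : ι → ZMod 2) :
    hammingDist w c = (flipCounts c w).1 + (flipCounts c w).2 := by
  simp only [hammingDist, flipCounts, flipSets, card_filter, ← sum_add_distrib]
  refine sum_congr rfl fun i _ => ?_
  rcases eq_zero_or_eq_one (c i) with hc | hc <;> rcases eq_zero_or_eq_one (w i) with hw | hw <;>
    simp [hc, hw]

theorem hammingNorm_add_flipCounts (c w : ι → ZMod 2) :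
    hammingNorm w + (flipCounts c w).1 = hammingNorm c + (flipCounts c w).2 := by
  simp only [hammingNorm, flipCounts, flipSets, card_filter, ← sum_add_distrib]
  refine sum_congr rfl fun i _ => ?_
  rcases eq_zero_or_eq_one (c i) with hc | hc <;> rcases eq_zero_or_eq_one (w i) with hw | hw <;>
    simp [hc, hw]

variable [DecidableEq ι]

def overwrite (c : ι → ZMod 2) (A B : Finset ι) : ι → ZMod 2 :=
  fun i => if i ∈ A then 0 else if i ∈ B then 1 else c i

theorem overwrite_flipSets (c w : ι → ZMod 2) :
    overwrite c (flipSets c w).1 (flipSets c w).2 = w := by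
  funext i
  simp only [overwrite, flipSets, mem_filter, mem_univ, true_and]
  rcases eq_zero_or_eq_one (c i) with hc | hc <;> rcases eq_zero_or_eq_one (w i) with hw | hw <;>
    simp [hc, hw]

theorem flipSets_overwrite (c : ι → ZMod 2) {A B : Finset ι} (hA : ∀ i ∈ A, c i = 1)
    (hB : ∀ i ∈ B, c i = 0) : flipSets c (overwrite c A B) = (A, B) := by
  have mem_iff (i : ι) : (c i = 1 ∧ overwrite c A B i = 0 ↔ i ∈ A) ∧
      (c i = 0 ∧ overwrite c A B i = 1 ↔ i ∈ B) := by
    by_cases hiA : i ∈ A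
    · have hiB : i ∉ B := fun hiB => by simpa [hA i hiA] using hB i hiB
      simp [overwrite, hiA, hiB, hA i hiA]
    by_cases hiB : i ∈ B
    · simp [overwrite, hiA, hiB, hB i hiB]
    rcases eq_zero_or_eq_one (c i) with h | h <;> simp [overwrite, hiA, hiB, h]
  refine Prod.ext ?_ ?_ <;> ext i <;> simp only [flipSets, mem_filter, mem_univ, true_and, mem_iff]

theorem card_filter_flipCounts_eq (c : ι → ZMod 2) (ab : ℕ × ℕ) :
    #{w | flipCounts c w = ab} =
      (hammingNorm c).choose ab.1 * (card ι - hammingNorm c).choose ab.2 := by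
  rw [← card_filter_eq_zero_eq_card_sub_hammingNorm, ← card_filter_eq_one_eq_hammingNorm,
    ← card_powersetCard, ← card_powersetCard, ← card_product]
  refine card_nbij' (flipSets c) (fun AB => overwrite c AB.1 AB.2) ?_ ?_
    (fun w _ => overwrite_flipSets c w) ?_
  · intro w hw
    simp only [mem_coe, mem_filter, flipCounts, mem_univ, true_and, Prod.ext_iff] at hw
    simp only [coe_product, Set.mem_prod, mem_coe, mem_powersetCard, hw, and_true]
    constructor <;> intro i <;> simp +contextual [flipSets]
  · rintro ⟨A, B⟩ hAB
    simp only [coe_product, Set.mem_prod, mem_coe, mem_powersetCard, subset_iff, mem_filter,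
      mem_univ, true_and] at hAB
    refine mem_coe.2 (mem_filter.2 ⟨mem_univ _, ?_⟩)
    simp only [flipCounts, flipSets_overwrite c hAB.1.1 hAB.2.1, hAB.1.2, hAB.2.2]
  · rintro ⟨A, B⟩ hAB
    simp only [coe_product, Set.mem_prod, mem_coe, mem_powersetCard, subset_iff, mem_filter,
      mem_univ, true_and] at hAB
    exact flipSets_overwrite c hAB.1.1 hAB.2.1

theorem sum_sphere_inter_ball_flipCounts {M : Type*} [AddCommMonoid M] (c : ι → ZMod 2)
    (t u : ℕ) (f : ℕ × ℕ → M) :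
    ∑ w ∈ univ.filter (fun w => hammingNorm w = u ∧ hammingDist w c ≤ t),
        f (flipCounts c w) =
      ∑ ab ∈ (range (t + 1) ×ˢ range (t + 1)).filter
          (fun ab => ab.1 + ab.2 ≤ t ∧ u + ab.1 = hammingNorm c + ab.2),
        ((hammingNorm c).choose ab.1 * (card ι - hammingNorm c).choose ab.2) • f ab := by
  have mem_iff (w : ι → ZMod 2) : hammingNorm w = u ∧ hammingDist w c ≤ t ↔
      flipCounts c w ∈ (range (t + 1) ×ˢ range (t + 1)).filter
        (fun ab => ab.1 + ab.2 ≤ t ∧ u + ab.1 = hammingNorm c + ab.2) := by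
    have := hammingNorm_add_flipCounts c w
    simp only [mem_filter, mem_product, mem_range, hammingDist_eq_flipCounts]
    omega
  rw [← sum_fiberwise_of_maps_to' (g := flipCounts c)
    fun w hw => (mem_iff w).1 (mem_filter.1 hw).2]
  refine sum_congr rfl fun ab hab => ?_
  rw [sum_const, ← card_filter_flipCounts_eq]
  congr 2
  ext w
  simp only [mem_filter, mem_univ, true_and, mem_iff, and_iff_right_iff_imp]
  exact fun h => h ▸ mem_filter.1 hab

end BinaryWord

theorem bdd_anchor_weighted_count_general {n t : ℕ}
    (C : Submodule (ZMod 2) (Fin n → ZMod 2)) [DecidablePred (· ∈ C)]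
    (u r : ℕ) (x z : ℝ) :
    ∑ w ∈ Finset.univ.filter (fun w : Fin n → ZMod 2 => hammingNorm w = u),
      ∑ c ∈ Finset.univ.filter (fun c : Fin n → ZMod 2 =>
          c ∈ C ∧ hammingNorm c = r ∧ hammingDist w c ≤ t),
        x ^ (Finset.univ.filter (fun i => c i = 1 ∧ w i = 0)).card *
          z ^ (Finset.univ.filter (fun i => c i = 0 ∧ w i = 1)).card =
      ((Finset.univ.filter
          (fun c : Fin n → ZMod 2 => c ∈ C ∧ hammingNorm c = r)).card : ℝ) *
        ∑ ab ∈ (Finset.range (t + 1) ×ˢ Finset.range (t + 1)).filter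
            (fun ab => ab.1 + ab.2 ≤ t ∧ u + ab.1 = r + ab.2),
          (r.choose ab.1 : ℝ) * ((n - r).choose ab.2 : ℝ) *
            x ^ ab.1 * z ^ ab.2 := by
  rw [sum_comm' (t' := univ.filter fun c : Fin n → ZMod 2 => c ∈ C ∧ hammingNorm c = r)
      (s' := fun c => univ.filter fun w => hammingNorm w = u ∧ hammingDist w c ≤ t)
      fun w c => by simp only [mem_filter, mem_univ, true_and]; tauto,
    ← nsmul_eq_mul, ← sum_const]
  refine sum_congr rfl fun c hc => ?_
  obtain ⟨-, rfl⟩ := (mem_filter.1 hc).2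
  refine (BinaryWord.sum_sphere_inter_ball_flipCounts c t u fun ab => x ^ ab.1 * z ^ ab.2).trans
    (sum_congr rfl fun ab _ => ?_)
  rw [nsmul_eq_mul, Fintype.card_fin]
  push_cast
  ring

/-- For a binary linear code with minimum distance at least `2t+1`,
`u > t` and real numbers `x, z`:
`∑_{w : wt(w) = u} ∑_{c ∈ C : wt(c) = r, d(w,c) ≤ t} x^{a(w,c)} z^{b(w,c)}
  = A_r · ∑_{(a,b) : a+b ≤ t, u+a = r+b} C(r,a)·C(n−r,b)·x^a·z^b`,
where `a(w,c) = |{i : c_i = 1, w_i = 0}|` and `b(w,c) = |{i : c_i = 0, w_i = 1}|`. -/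
theorem bdd_anchor_weighted_count {n t : ℕ}
    (C : Submodule (ZMod 2) (Fin n → ZMod 2)) [DecidablePred (· ∈ C)]
    (hdmin : ∀ c ∈ C, c ≠ 0 → 2 * t + 1 ≤ hammingNorm c)
    (u r : ℕ) (hu : t < u) (x z : ℝ) :
    ∑ w ∈ Finset.univ.filter (fun w : Fin n → ZMod 2 => hammingNorm w = u),
      ∑ c ∈ Finset.univ.filter (fun c : Fin n → ZMod 2 =>
          c ∈ C ∧ hammingNorm c = r ∧ hammingDist w c ≤ t),
        x ^ (Finset.univ.filter (fun i => c i = 1 ∧ w i = 0)).card *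
          z ^ (Finset.univ.filter (fun i => c i = 0 ∧ w i = 1)).card =
      ((Finset.univ.filter
          (fun c : Fin n → ZMod 2 => c ∈ C ∧ hammingNorm c = r)).card : ℝ) *
        ∑ ab ∈ (Finset.range (t + 1) ×ˢ Finset.range (t + 1)).filter
            (fun ab => ab.1 + ab.2 ≤ t ∧ u + ab.1 = r + ab.2),
          (r.choose ab.1 : ℝ) * ((n - r).choose ab.2 : ℝ) *
            x ^ ab.1 * z ^ ab.2 :=
  bdd_anchor_weighted_count_general C u r x z
end
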